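/- Let A and B be connected ℕ-graded k-algebras, each generated as a k-algebra by finitely many homogeneous elements of positive degree, and let T = A ⊗_k B be their tensor product k-algebra (A and B need not be commutative). Let M be a left T-module. Then: (i) the set τ_B M = { m ∈ M : there exists n ∈ ℕ with (1 ⊗ b) · m = 0 for all b ∈ B_{≥n} } is a T-submodule of M; and (ii) if every element m ∈ M admits n_1, n_2 ∈ ℕ (depending on m) such that (a ⊗ b) · m = 0 for all a ∈ A_{≥n_1} and all b ∈ B_{≥n_2}, then the quotient module M/τ_B M is A-torsion, i.e. every element of M/τ_B M is annihilated by { a ⊗ 1 : a ∈ A_{≥n} } for some n ∈ ℕ. (So such an M is an extension of an A-torsion module by a B-torsion module.) -/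

import Mathlib

/-!
Since `B_{≥n}` is a right ideal of `B` and `1 ⊗ B` commutes with `A ⊗ 1`, the identity
`(1 ⊗ b)(a ⊗ b') = (a ⊗ 1)(1 ⊗ bb')` shows that `τ_B M` is stable under `A ⊗ B`. For the
quotient, `(1 ⊗ b)(a ⊗ 1) = a ⊗ b`, so if `A_{≥n₁} ⊗ B_{≥n₂}` kills `m` then `(a ⊗ 1) m` lies in
`τ_B M` for every `a ∈ A_{≥n₁}`.
-/

open scoped TensorProduct

/-- The `k`-submodule `A_{≥ n} = ⊕_{m ≥ n} A_m` of a graded algebra. -/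
def gradedPiecesGE {k A : Type*} [Field k] [Ring A] [Algebra k A]
    (𝒜 : ℕ → Submodule k A) (n : ℕ) : Submodule k A :=
  ⨆ (m : ℕ) (_ : n ≤ m), 𝒜 m

section GradedPieces

variable {k A : Type*} [Field k] [Ring A] [Algebra k A] (𝒜 : ℕ → Submodule k A)

lemma gradedPiecesGE_antitone : Antitone (gradedPiecesGE 𝒜) := fun _ _ h =>
  iSup₂_le fun m hm => le_iSup₂_of_le (f := fun m (_ : _ ≤ m) => 𝒜 m) m (h.trans hm) le_rfl

lemma gradedPiecesGE_mul_top_le [GradedAlgebra 𝒜] (n : ℕ) :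
    gradedPiecesGE 𝒜 n * ⊤ ≤ gradedPiecesGE 𝒜 n := by
  rw [← (DirectSum.Decomposition.isInternal 𝒜).submodule_iSup_eq_top, gradedPiecesGE,
    Submodule.iSup_mul]
  refine iSup_le fun m => ?_
  rw [Submodule.iSup_mul]
  refine iSup_le fun hm => ?_
  rw [Submodule.mul_iSup]
  refine iSup_le fun j => Submodule.mul_le.2 fun a ha b hb => ?_
  exact le_iSup₂_of_le (f := fun m (_ : n ≤ m) => 𝒜 m) (m + j) (hm.trans (Nat.le_add_right m j))
    le_rfl (SetLike.mul_mem_graded ha hb)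

lemma mul_mem_gradedPiecesGE [GradedAlgebra 𝒜] {n : ℕ} {a : A}
    (ha : a ∈ gradedPiecesGE 𝒜 n) (a' : A) : a * a' ∈ gradedPiecesGE 𝒜 n :=
  gradedPiecesGE_mul_top_le 𝒜 n (Submodule.mul_mem_mul ha Submodule.mem_top)

end GradedPieces

lemma one_tmul_mul_tmul {k A B : Type*} [CommSemiring k] [Semiring A] [Algebra k A] [Semiring B]
    [Algebra k B] (a : A) (b b' : B) :
    ((1 : A) ⊗ₜ[k] b) * (a ⊗ₜ[k] b') = (a ⊗ₜ[k] (1 : B)) * ((1 : A) ⊗ₜ[k] (b * b')) := by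
  simp only [Algebra.TensorProduct.tmul_mul_tmul, one_mul, mul_one]

section RightTorsion

variable {k B : Type*} (A : Type*) [Field k] [Ring A] [Algebra k A] [Ring B] [Algebra k B]
  (ℬ : ℕ → Submodule k B) [GradedAlgebra ℬ] (M : Type*) [AddCommGroup M] [Module (A ⊗[k] B) M]

def rightTorsion : Submodule (A ⊗[k] B) M where
  carrier := {m | ∃ n : ℕ, ∀ b ∈ gradedPiecesGE ℬ n, ((1 : A) ⊗ₜ[k] b) • m = 0}
  zero_mem' := ⟨0, fun _ _ => smul_zero _⟩
  add_mem' := by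
    rintro m m' ⟨n, hn⟩ ⟨n', hn'⟩
    refine ⟨max n n', fun b hb => ?_⟩
    rw [smul_add, hn b (gradedPiecesGE_antitone ℬ (le_max_left n n') hb),
      hn' b (gradedPiecesGE_antitone ℬ (le_max_right n n') hb), add_zero]
  smul_mem' := by
    rintro t m ⟨n, hn⟩
    refine ⟨n, fun b hb => ?_⟩
    induction t using TensorProduct.induction_on with
    | zero => rw [zero_smul, smul_zero]
    | tmul a b' =>
      rw [smul_smul, one_tmul_mul_tmul, mul_smul, hn _ (mul_mem_gradedPiecesGE ℬ hb b'),
        smul_zero]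
    | add t t' ht ht' => rw [add_smul, smul_add, ht, ht', add_zero]

variable {A ℬ M}

lemma mem_rightTorsion {m : M} :
    m ∈ rightTorsion A ℬ M ↔ ∃ n : ℕ, ∀ b ∈ gradedPiecesGE ℬ n, ((1 : A) ⊗ₜ[k] b) • m = 0 :=
  Iff.rfl

lemma tmul_one_smul_mem_rightTorsion {a : A} {m : M} {n : ℕ}
    (h : ∀ b ∈ gradedPiecesGE ℬ n, (a ⊗ₜ[k] b) • m = 0) :
    (a ⊗ₜ[k] (1 : B)) • m ∈ rightTorsion A ℬ M :=
  ⟨n, fun b hb => by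
    rw [smul_smul, Algebra.TensorProduct.tmul_mul_tmul, one_mul, mul_one]
    exact h b hb⟩

end RightTorsion

theorem bibi_torsion_is_extension_general
    {k A B : Type*} [Field k] [Ring A] [Algebra k A] [Ring B] [Algebra k B]
    (𝒜 : ℕ → Submodule k A) (ℬ : ℕ → Submodule k B) [GradedAlgebra ℬ]
    {M : Type*} [AddCommGroup M] [Module (A ⊗[k] B) M] :
    ∃ τB : Submodule (A ⊗[k] B) M,
      (∀ m : M, m ∈ τB ↔
          ∃ n : ℕ, ∀ b ∈ gradedPiecesGE ℬ n, ((1 : A) ⊗ₜ[k] b) • m = 0) ∧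
      ((∀ m : M, ∃ n₁ n₂ : ℕ, ∀ a ∈ gradedPiecesGE 𝒜 n₁, ∀ b ∈ gradedPiecesGE ℬ n₂,
            (a ⊗ₜ[k] b) • m = 0) →
        ∀ q : M ⧸ τB, ∃ n : ℕ, ∀ a ∈ gradedPiecesGE 𝒜 n,
            (a ⊗ₜ[k] (1 : B)) • q = 0) := by
  refine ⟨rightTorsion A ℬ M, fun m => mem_rightTorsion, fun hM q => ?_⟩
  obtain ⟨m, rfl⟩ := Submodule.Quotient.mk_surjective _ q
  obtain ⟨n₁, n₂, hm⟩ := hM m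
  refine ⟨n₁, fun a ha => ?_⟩
  rw [← Submodule.Quotient.mk_smul, Submodule.Quotient.mk_eq_zero]
  exact tmul_one_smul_mem_rightTorsion (hm a ha)

theorem bibi_torsion_is_extension
    {k A B : Type*} [Field k] [Ring A] [Algebra k A] [Ring B] [Algebra k B]
    (𝒜 : ℕ → Submodule k A) [GradedAlgebra 𝒜] (ℬ : ℕ → Submodule k B) [GradedAlgebra ℬ]
    (hconnA : 𝒜 0 = (1 : Submodule k A)) (hconnB : ℬ 0 = (1 : Submodule k B))
    {r : ℕ} (x : Fin r → A) (degA : Fin r → ℕ)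
    (hdegposA : ∀ i, 0 < degA i) (hhomA : ∀ i, x i ∈ 𝒜 (degA i))
    (hgenA : Algebra.adjoin k (Set.range x) = ⊤)
    {s : ℕ} (y : Fin s → B) (degB : Fin s → ℕ)
    (hdegposB : ∀ i, 0 < degB i) (hhomB : ∀ i, y i ∈ ℬ (degB i))
    (hgenB : Algebra.adjoin k (Set.range y) = ⊤)
    {M : Type*} [AddCommGroup M] [Module (A ⊗[k] B) M] :
    ∃ τB : Submodule (A ⊗[k] B) M,
      (∀ m : M, m ∈ τB ↔
          ∃ n : ℕ, ∀ b ∈ gradedPiecesGE ℬ n, ((1 : A) ⊗ₜ[k] b) • m = 0) ∧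
      ((∀ m : M, ∃ n₁ n₂ : ℕ, ∀ a ∈ gradedPiecesGE 𝒜 n₁, ∀ b ∈ gradedPiecesGE ℬ n₂,
            (a ⊗ₜ[k] b) • m = 0) →
        ∀ q : M ⧸ τB, ∃ n : ℕ, ∀ a ∈ gradedPiecesGE 𝒜 n,
            (a ⊗ₜ[k] (1 : B)) • q = 0) :=
  bibi_torsion_is_extension_general 𝒜 ℬ
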